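/- Let P ⊂ ℝ^N be an integral convex polytope of dimension d with μ_midp(P) ≤ (d−1)/2. Then μ_idp(P) ≤ (d−3)/2 + μ_midp(P). -/

import Mathlib

open scoped BigOperators Pointwise

/-- Points of `ℝ^N`. -/
abbrev Pt (N : ℕ) := Fin N → ℝ

/-- A point has integer coordinates. -/
def IsLat {N : ℕ} (x : Pt N) : Prop := ∀ i, ∃ z : ℤ, x i = (z : ℝ)

/-- Lattice points of a set. -/
def latPts {N : ℕ} (P : Set (Pt N)) : Set (Pt N) := {x ∈ P | IsLat x}

/-- The dilated polytope `kP`. -/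
def dil {N : ℕ} (k : ℕ) (P : Set (Pt N)) : Set (Pt N) := (k : ℝ) • P

/-- `α` is a sum of `k` lattice points of `P`. -/
def DecomposesIn {N : ℕ} (P : Set (Pt N)) (k : ℕ) (α : Pt N) : Prop :=
  ∃ f : Fin k → Pt N, (∀ i, f i ∈ latPts P) ∧ α = ∑ i, f i

/-- The integer decomposition property. -/
def HasIDP {N : ℕ} (P : Set (Pt N)) : Prop :=
  ∀ k : ℕ, 0 < k → ∀ α ∈ latPts (dil k P), DecomposesIn P k α

/-- Very ampleness: decomposition holds for all sufficiently large `k`. -/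
def VeryAmple {N : ℕ} (P : Set (Pt N)) : Prop :=
  ∃ k₀ : ℕ, ∀ k, k₀ ≤ k → ∀ α ∈ latPts (dil k P), DecomposesIn P k α

/-- An integral convex polytope: the convex hull of finitely many lattice points
(which include all its vertices). -/
def IsIntegralPolytope {N : ℕ} (P : Set (Pt N)) : Prop :=
  ∃ V : Finset (Pt N), (∀ v ∈ V, IsLat v) ∧ P = convexHull ℝ (V : Set (Pt N))

/-- Dimension of a polytope: the rank of the direction of its affine span. -/
noncomputable def polyDim {N : ℕ} (P : Set (Pt N)) : ℕ :=
  Module.finrank ℝ (affineSpan ℝ P).direction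

/-- Lattice points of the cone `C(P) ⊂ ℝ^{N+1}` generated by `P̃ = P × {1}`;
a point of `ℝ^{N+1}` is represented as a pair `(x, deg)`. -/
def coneLat {N : ℕ} (P : Set (Pt N)) : Set (Pt N × ℝ) :=
  {p | (∃ (m : ℕ) (c : Fin m → ℝ) (w : Fin m → Pt N),
        (∀ i, 0 ≤ c i ∧ w i ∈ P) ∧ p.1 = ∑ i, c i • w i ∧ p.2 = ∑ i, c i)
    ∧ IsLat p.1 ∧ ∃ z : ℤ, p.2 = (z : ℝ)}

/-- The monoid `ℤ_{≥0}(P̃ ∩ ℤ^{N+1})` generated by the degree-one lattice points of the cone. -/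
def genMonoid {N : ℕ} (P : Set (Pt N)) : Set (Pt N × ℝ) :=
  {p | ∃ (m : ℕ) (f : Fin m → Pt N), (∀ i, f i ∈ latPts P) ∧
        p.1 = ∑ i, f i ∧ p.2 = (m : ℝ)}

/-- `H` is the minimal Hilbert basis of the cone `C(P)`. -/
def IsMinHilbertBasis {N : ℕ} (P : Set (Pt N)) (H : Set (Pt N × ℝ)) : Prop :=
  (H.Finite ∧ H ⊆ coneLat P ∧
      coneLat P ⊆ (AddSubmonoid.closure H : Set (Pt N × ℝ))) ∧
  ∀ H' : Set (Pt N × ℝ),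
    (H'.Finite ∧ H' ⊆ coneLat P ∧
      coneLat P ⊆ (AddSubmonoid.closure H' : Set (Pt N × ℝ))) → H ⊆ H'

/-- `v` lists the vertices of an empty `d`-simplex contained in `P`. -/
def EmptySimplexIn {N : ℕ} (P : Set (Pt N)) (d : ℕ) (v : Fin (d+1) → Pt N) : Prop :=
  (∀ i, v i ∈ latPts P) ∧ AffineIndependent ℝ v ∧
    ∀ x ∈ convexHull ℝ (Set.range v), IsLat x → x ∈ Set.range v

/-- `Box(S)` of a simplex with vertex list `v`: lattice points
`Σ rᵢ (vᵢ, 1)` with `0 ≤ rᵢ < 1`. -/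
def boxSimplex {N d : ℕ} (v : Fin (d+1) → Pt N) : Set (Pt N × ℝ) :=
  {p | ∃ r : Fin (d+1) → ℝ, (∀ i, 0 ≤ r i ∧ r i < 1) ∧
      p.1 = ∑ i, r i • v i ∧ p.2 = ∑ i, r i ∧ IsLat p.1 ∧ ∃ z : ℤ, p.2 = (z : ℝ)}

/-- `Box(P)`: holes of `P`, i.e. box points of empty `d`-simplices in `P` that are not
nonnegative integer combinations of `P̃ ∩ ℤ^{N+1}`. -/
def boxP {N : ℕ} (P : Set (Pt N)) (d : ℕ) : Set (Pt N × ℝ) :=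
  (⋃ v ∈ {v : Fin (d+1) → Pt N | EmptySimplexIn P d v}, boxSimplex v) \ genMonoid P

/-- Ehrhart counting function `|nP ∩ ℤ^N|`. -/
noncomputable def ehr {N : ℕ} (P : Set (Pt N)) (n : ℕ) : ℕ := (latPts (dil n P)).ncard

/-- The `δ`-vector of a `d`-dimensional polytope, via finite differences of the
Ehrhart counting function. -/
noncomputable def deltaVec {N : ℕ} (P : Set (Pt N)) (d i : ℕ) : ℤ :=
  ∑ j ∈ Finset.range (i+1), (-1)^j * ((d+1).choose j) * (ehr P (i - j) : ℤ)

/-!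
Write `n = kq + s` with `s < k`. Grouping summands shows that `(kq)P` inherits the integer
decomposition property from `kP`, and the hypotheses give `dim P ≤ 2kq + 1`. For `r + 1 ≥ dim P`,
every lattice point of `(r + 1)P` splits off a lattice point of `P`: it lies in the cone over an
empty lattice simplex of `P`, and one of its barycentric coordinates there is `≥ 1`, since
otherwise the complementary point `∑ (1 - λᵢ) vᵢ` would be a lattice point of the simplex other
than a vertex. Hence, for `j ≥ 2`, a lattice point of `j(kq + s)P` is a lattice point of `2kq P`,
which is a sum of two lattice points of `(kq)P`, plus `2s + (j - 2)(kq + s)` lattice points of `P`;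
each half absorbs `s` of these, and the rest group into lattice points of `(kq + s)P`.
-/

open Finset

section Lattice

variable {N : ℕ}

def latticeAddSubgroup (N : ℕ) : AddSubgroup (Pt N) where
  carrier := {x | IsLat x}
  add_mem' {x y} hx hy i := by
    obtain ⟨a, ha⟩ := hx i
    obtain ⟨b, hb⟩ := hy i
    exact ⟨a + b, by simp [ha, hb]⟩
  zero_mem' _ := ⟨0, by simp⟩
  neg_mem' {x} hx i := by
    obtain ⟨a, ha⟩ := hx i
    exact ⟨-a, by simp [ha]⟩

lemma isLat_iff_mem_latticeAddSubgroup {x : Pt N} : IsLat x ↔ x ∈ latticeAddSubgroup N :=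
  Iff.rfl

variable {P : Set (Pt N)}

lemma dil_dil (a b : ℕ) (P : Set (Pt N)) : dil a (dil b P) = dil (a * b) P := by
  simp only [dil, smul_smul, Nat.cast_mul]

lemma dil_one (P : Set (Pt N)) : dil 1 P = P := by
  simp [dil]

lemma nonempty_of_mem_dil {k : ℕ} {x : Pt N} (hx : x ∈ dil k P) : P.Nonempty :=
  Set.smul_set_nonempty.1 ⟨x, hx⟩

lemma Convex.add_mem_latPts_dil (hP : Convex ℝ P) {a b : ℕ} {x y : Pt N}
    (hx : x ∈ latPts (dil a P)) (hy : y ∈ latPts (dil b P)) :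
    x + y ∈ latPts (dil (a + b) P) := by
  refine ⟨?_, (latticeAddSubgroup N).add_mem hx.2 hy.2⟩
  rw [dil, Nat.cast_add, hP.add_smul (Nat.cast_nonneg a) (Nat.cast_nonneg b)]
  exact Set.add_mem_add hx.1 hy.1

lemma Convex.sum_smul_mem_dil (hP : Convex ℝ P) {ι : Type*} {s : Finset ι} {w : ι → ℝ}
    {p : ι → Pt N} {m : ℕ} (hm : 0 < m) (hw : ∀ i ∈ s, 0 ≤ w i) (hsum : ∑ i ∈ s, w i = m)
    (hp : ∀ i ∈ s, p i ∈ P) : ∑ i ∈ s, w i • p i ∈ dil m P := by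
  refine ⟨s.centerMass w p, hP.centerMass_mem hw (by rw [hsum]; exact_mod_cast hm) hp, ?_⟩
  simp only [Finset.centerMass, hsum]
  exact smul_inv_smul₀ (by exact_mod_cast hm.ne') _

lemma decomposesIn_zero_iff {α : Pt N} : DecomposesIn P 0 α ↔ α = 0 :=
  ⟨fun ⟨_, _, h⟩ => by simpa using h, fun h => ⟨Fin.elim0, fun i => i.elim0, by simpa using h⟩⟩

lemma decomposesIn_one_iff {α : Pt N} : DecomposesIn P 1 α ↔ α ∈ latPts P :=
  ⟨fun ⟨f, hf, h⟩ => by simpa [h] using hf 0, fun h => ⟨fun _ => α, fun _ => h, by simp⟩⟩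

lemma decomposesIn_add_iff {a b : ℕ} {α : Pt N} :
    DecomposesIn P (a + b) α ↔ ∃ β γ, DecomposesIn P a β ∧ DecomposesIn P b γ ∧ α = β + γ := by
  constructor
  · rintro ⟨f, hf, rfl⟩
    exact ⟨_, _, ⟨_, fun i => hf _, rfl⟩, ⟨_, fun i => hf _, rfl⟩, Fin.sum_univ_add f⟩
  · rintro ⟨β, γ, ⟨f, hf, rfl⟩, ⟨g, hg, rfl⟩, rfl⟩
    refine ⟨Fin.append f g, Fin.addCases (by simpa using hf) (by simpa using hg), ?_⟩
    simp [Fin.sum_univ_add]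

lemma DecomposesIn.add {a b : ℕ} {β γ : Pt N} (hβ : DecomposesIn P a β)
    (hγ : DecomposesIn P b γ) : DecomposesIn P (a + b) (β + γ) :=
  decomposesIn_add_iff.2 ⟨β, γ, hβ, hγ, rfl⟩

lemma DecomposesIn.mem_latPts_dil (hP : Convex ℝ P) (hne : P.Nonempty) {m : ℕ} {α : Pt N}
    (h : DecomposesIn P m α) : α ∈ latPts (dil m P) := by
  induction m generalizing α with
  | zero =>
    rw [decomposesIn_zero_iff.1 h]
    refine ⟨?_, (latticeAddSubgroup N).zero_mem⟩
    simp [dil, Set.zero_smul_set hne]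
  | succ m ih =>
    obtain ⟨β, γ, hβ, hγ, rfl⟩ := decomposesIn_add_iff.1 h
    exact hP.add_mem_latPts_dil (ih hβ) (by simpa [dil_one] using decomposesIn_one_iff.1 hγ)

lemma DecomposesIn.dil (hP : Convex ℝ P) (hne : P.Nonempty) {a n : ℕ} {α : Pt N}
    (h : DecomposesIn P (a * n) α) : DecomposesIn (dil n P) a α := by
  induction a generalizing α with
  | zero => simpa [decomposesIn_zero_iff] using h
  | succ a ih =>
    rw [Nat.succ_mul] at h
    obtain ⟨β, γ, hβ, hγ, rfl⟩ := decomposesIn_add_iff.1 h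
    exact (ih hβ).add (decomposesIn_one_iff.2 (hγ.mem_latPts_dil hP hne))

lemma HasIDP.dil {Q : Set (Pt N)} (hQ : HasIDP Q) (hconv : Convex ℝ Q) {q : ℕ} (hq : 0 < q) :
    HasIDP (dil q Q) := by
  intro j hj α hα
  rw [dil_dil] at hα
  exact (hQ _ (Nat.mul_pos hj hq) α hα).dil hconv (nonempty_of_mem_dil hα.1)

end Lattice

lemma sum_insert_erase_ite {α M : Type*} [DecidableEq α] [AddCommMonoid M] {t : Finset α}
    {y v : α} (hy : y ∉ t) (g f : α → M) (hf : f v = 0) :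
    ∑ u ∈ insert y (t.erase v), (if u = y then g u else f u) = g y + ∑ u ∈ t, f u := by
  rw [sum_insert fun h => hy (mem_of_mem_erase h), if_pos rfl, ← sum_erase t hf]
  exact congrArg _ <| sum_congr rfl fun u hu =>
    if_neg fun h => hy (by rw [← h]; exact mem_of_mem_erase hu)

section ConvexGeometry

variable {E : Type*} [AddCommGroup E] [Module ℝ E]

lemma AffineIndependent.sum_smul_notMem {t : Finset E} (ht : AffineIndependent ℝ ((↑) : t → E))
    (hcard : 2 ≤ #t) {μ : E → ℝ} (hμ : ∀ v ∈ t, 0 < μ v) (hμ1 : ∑ v ∈ t, μ v = 1) :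
    ∑ v ∈ t, μ v • v ∉ t := by
  classical
  intro hmem
  obtain ⟨u, hu, huy⟩ := exists_mem_ne hcard (∑ v ∈ t, μ v • v)
  have := ht.eq_of_sum_eq_sum_subtype (w₁ := μ)
    (w₂ := fun v => if v = ∑ v ∈ t, μ v • v then 1 else 0)
    (by simp [hμ1, hmem]) (by simp [ite_smul, hmem]) u hu
  simp only [huy, if_false] at this
  exact (hμ u hu).ne' this

theorem exists_mem_convexHull_insert_erase [DecidableEq E] {t : Finset E} {x y : E}
    (hx : x ∈ convexHull ℝ (t : Set E)) (hy : y ∈ convexHull ℝ (t : Set E)) (hyt : y ∉ t) :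
    ∃ v ∈ t, x ∈ convexHull ℝ (↑(insert y (t.erase v)) : Set E) := by
  obtain ⟨κ, hκ0, hκ1, rfl⟩ := Finset.mem_convexHull'.1 hx
  obtain ⟨μ, hμ0, hμ1, hyμ⟩ := Finset.mem_convexHull'.1 hy
  have hpos : (t.filter (0 < μ ·)).Nonempty := by
    by_contra h
    rw [not_nonempty_iff_eq_empty, filter_eq_empty_iff] at h
    have : ∑ v ∈ t, μ v = 0 :=
      sum_eq_zero fun v hv => le_antisymm (not_lt.1 (h hv)) (hμ0 v hv)
    linarith
  -- Slide `x` away from `y` until the first barycentric coordinate, at `v₀`, vanishes.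
  obtain ⟨v₀, hv₀, hmin⟩ := exists_min_image _ (fun v => κ v / μ v) hpos
  rw [mem_filter] at hv₀
  set c := κ v₀ / μ v₀
  have hle : ∀ v ∈ t, c * μ v ≤ κ v := by
    intro v hv
    rcases (hμ0 v hv).eq_or_lt with h | h
    · rw [← h, mul_zero]
      exact hκ0 v hv
    · exact (le_div_iff₀ h).1 (hmin v (mem_filter.2 ⟨hv, h⟩))
  have hv₀c : κ v₀ - c * μ v₀ = 0 := by
    rw [div_mul_cancel₀ _ hv₀.2.ne', sub_self]
  refine ⟨v₀, hv₀.1, Finset.mem_convexHull'.2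
    ⟨fun u => if u = y then c else κ u - c * μ u, fun u hu => ?_, ?_, ?_⟩⟩
  · dsimp only
    split_ifs
    · exact div_nonneg (hκ0 _ hv₀.1) hv₀.2.le
    · exact sub_nonneg.2 (hle u (mem_of_mem_erase (mem_of_mem_insert_of_ne hu ‹_›)))
  · rw [sum_insert_erase_ite hyt (fun _ => c) (fun u => κ u - c * μ u) hv₀c, sum_sub_distrib,
      ← mul_sum, hκ1, hμ1]
    ring
  · simp_rw [ite_smul]
    rw [sum_insert_erase_ite hyt (fun u => c • u) (fun u => (κ u - c * μ u) • u)
      (by rw [hv₀c, zero_smul])]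
    simp only [sub_smul, mul_smul, sum_sub_distrib, ← smul_sum, hyμ]
    abel

theorem AffineIndependent.notMem_convexHull_insert_erase [DecidableEq E] {t : Finset E}
    (ht : AffineIndependent ℝ ((↑) : t → E)) {y : E} (hy : y ∈ convexHull ℝ (t : Set E))
    (hyt : y ∉ t) {v₀ : E} (hv₀ : v₀ ∈ t) :
    v₀ ∉ convexHull ℝ (↑(insert y (t.erase v₀)) : Set E) := by
  obtain ⟨μ, hμ0, hμ1, hyμ⟩ := Finset.mem_convexHull'.1 hy
  intro hv
  obtain ⟨a, ha0, ha1, hav⟩ := Finset.mem_convexHull'.1 hv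
  set f : E → ℝ := fun u => if u = v₀ then 0 else a u
  have hf0 : ∀ u ∈ t, 0 ≤ f u := by
    intro u hu
    simp only [f]
    split_ifs with h
    · exact le_rfl
    · exact ha0 u (mem_insert_of_mem (mem_erase.2 ⟨h, hu⟩))
  have hcongr : ∀ u ∈ insert y (t.erase v₀), a u = if u = y then a u else f u := by
    intro u hu
    split_ifs with h
    · rfl
    · simp [f, ne_of_mem_erase (mem_of_mem_insert_of_ne hu h)]
  replace ha1 : a y + ∑ u ∈ t, f u = 1 := by
    rw [← ha1, ← sum_insert_erase_ite (v := v₀) hyt a f (by simp [f])]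
    exact sum_congr rfl fun u hu => (hcongr u hu).symm
  replace hav : a y • y + ∑ u ∈ t, f u • u = v₀ := by
    rw [← hav, ← sum_insert_erase_ite (v := v₀) hyt (fun u => a u • u) (fun u => f u • u)
      (by simp [f])]
    exact sum_congr rfl fun u hu => by rw [← ite_smul, ← hcongr u hu]
  -- Comparing `v₀`-coordinates: `a y * μ v₀ = 1` with both factors in `[0, 1]`.
  have hcoord := ht.eq_of_sum_eq_sum_subtype (w₁ := fun u => a y * μ u + f u)
    (w₂ := fun u => if u = v₀ then 1 else 0)
    (by simp [sum_add_distrib, ← mul_sum, hμ1, ha1, hv₀])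
    (by simp [add_smul, mul_smul, sum_add_distrib, ← smul_sum, hyμ, hav, ite_smul, hv₀])
    v₀ hv₀
  simp only [f, ↓reduceIte, add_zero] at hcoord
  have hay : a y ≤ 1 := by linarith [sum_nonneg hf0]
  have hμv₀ : μ v₀ ≤ 1 := hμ1 ▸ single_le_sum hμ0 hv₀
  have hay1 : a y = 1 := by nlinarith [ha0 y (mem_insert_self _ _)]
  have hf : ∀ u ∈ t, f u = 0 := (sum_eq_zero_iff_of_nonneg hf0).1 (by linarith)
  rw [hay1, one_smul, sum_eq_zero fun u hu => by rw [hf u hu, zero_smul], add_zero] at hav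
  exact hyt (hav ▸ hv₀)

theorem exists_emptySimplex_of_mem_convexHull {S : Set E} (hS : S.Finite) {x : E}
    (hx : x ∈ convexHull ℝ S) :
    ∃ t : Finset E, ↑t ⊆ S ∧ AffineIndependent ℝ ((↑) : t → E) ∧
      x ∈ convexHull ℝ (t : Set E) ∧ S ∩ convexHull ℝ ↑t ⊆ ↑t := by
  classical
  set count : Finset E → ℕ := fun t => (S ∩ convexHull ℝ ↑t).ncard
  set T := {t : Finset E | ↑t ⊆ S ∧ x ∈ convexHull ℝ (t : Set E)}
  obtain ⟨t₀, ⟨ht₀S, hxt₀⟩, hmin⟩ :=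
    (measure count).wf.has_min T ⟨hS.toFinset, by simp, by simpa using hx⟩
  rw [convexHull_eq_union] at hxt₀
  simp only [Set.mem_iUnion] at hxt₀
  obtain ⟨t, htt₀, ht, hxt⟩ := hxt₀
  have htS : ↑t ⊆ S := htt₀.trans ht₀S
  refine ⟨t, htS, ht, hxt, fun y ⟨hyS, hy⟩ => ?_⟩
  by_contra hyt
  obtain ⟨v, hv, hxt'⟩ := exists_mem_convexHull_insert_erase hxt hy hyt
  have hvt' := ht.notMem_convexHull_insert_erase hy hyt hv
  have hsub : convexHull ℝ ↑(insert y (t.erase v)) ⊆ convexHull ℝ (t : Set E) := by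
    refine convexHull_min ?_ (convex_convexHull ℝ _)
    rw [coe_insert, Set.insert_subset_iff]
    exact ⟨hy, (coe_subset.2 (erase_subset v t)).trans (subset_convexHull ℝ _)⟩
  have hlt : count (insert y (t.erase v)) < count t :=
    Set.ncard_lt_ncard ⟨Set.inter_subset_inter_right _ hsub,
      fun h => hvt' (h ⟨htS hv, subset_convexHull ℝ _ hv⟩).2⟩ (hS.subset Set.inter_subset_left)
  have hle : count t ≤ count t₀ :=
    Set.ncard_le_ncard (Set.inter_subset_inter_right _ (convexHull_mono htt₀))
      (hS.subset Set.inter_subset_left)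
  refine hmin _ ⟨?_, hxt'⟩ (hlt.trans_le hle)
  rw [coe_insert, Set.insert_subset_iff]
  exact ⟨hyS, (coe_subset.2 (erase_subset v t)).trans htS⟩

end ConvexGeometry

section LatticePolytope

variable {N : ℕ} {P : Set (Pt N)}

lemma finite_latPts_of_isBounded (hP : Bornology.IsBounded P) : (latPts P).Finite := by
  obtain ⟨R, hR⟩ := hP.subset_closedBall 0
  refine ((Set.finite_Icc (fun _ : Fin N => -⌈R⌉) fun _ => ⌈R⌉).image
    fun z i => (z i : ℝ)).subset ?_
  rintro x ⟨hxP, hx⟩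
  choose z hz using hx
  have hbound : ∀ i, |(z i : ℝ)| ≤ R := fun i =>
    hz i ▸ (norm_le_pi_norm x i).trans (mem_closedBall_zero_iff.1 (hR hxP))
  refine ⟨z, ⟨fun i => ?_, fun i => ?_⟩, funext fun i => (hz i).symm⟩
  · have : ((-⌈R⌉ : ℤ) : ℝ) ≤ z i := by
      push_cast
      linarith [Int.le_ceil R, neg_abs_le (z i : ℝ), hbound i]
    exact_mod_cast this
  · exact Int.cast_le.1 (le_trans (le_abs_self _) ((hbound i).trans (Int.le_ceil R)))

lemma IsIntegralPolytope.convex (hP : IsIntegralPolytope P) : Convex ℝ P := by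
  obtain ⟨V, -, rfl⟩ := hP
  exact convex_convexHull ℝ _

lemma IsIntegralPolytope.finite_latPts (hP : IsIntegralPolytope P) : (latPts P).Finite := by
  obtain ⟨V, -, rfl⟩ := hP
  exact finite_latPts_of_isBounded (V.finite_toSet.isCompact_convexHull (𝕜 := ℝ)).isBounded

lemma IsIntegralPolytope.convexHull_latPts (hP : IsIntegralPolytope P) :
    convexHull ℝ (latPts P) = P := by
  refine (convexHull_min (fun x hx => hx.1) hP.convex).antisymm ?_
  obtain ⟨V, hV, rfl⟩ := hP
  exact convexHull_mono fun v hv => ⟨subset_convexHull ℝ _ hv, hV v hv⟩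

lemma AffineIndependent.card_le_polyDim_succ {t : Finset (Pt N)} (htP : ↑t ⊆ P)
    (ht : AffineIndependent ℝ ((↑) : t → Pt N)) : #t ≤ polyDim P + 1 := by
  have hspan : vectorSpan ℝ (Set.range ((↑) : t → Pt N)) ≤ (affineSpan ℝ P).direction := by
    rw [Subtype.range_coe, direction_affineSpan]
    exact vectorSpan_mono ℝ htP
  simpa [polyDim] using
    ht.card_le_finrank_succ.trans (Nat.add_le_add_right (Submodule.finrank_mono hspan) 1)

lemma exists_one_le_coord_of_emptySimplex (hP : Convex ℝ P) {t : Finset (Pt N)}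
    (htS : ↑t ⊆ latPts P) (ht : AffineIndependent ℝ ((↑) : t → Pt N))
    (hempty : latPts P ∩ convexHull ℝ ↑t ⊆ ↑t) (hcard : 2 ≤ #t) {κ : Pt N → ℝ}
    (hκ1 : ∑ v ∈ t, κ v = #t - 1) (hlat : IsLat (∑ v ∈ t, κ v • v)) : ∃ v ∈ t, 1 ≤ κ v := by
  by_contra! hsmall
  have hμ : ∀ v ∈ t, 0 < 1 - κ v := fun v hv => sub_pos.2 (hsmall v hv)
  have hμ1 : ∑ v ∈ t, (1 - κ v) = 1 := by
    rw [sum_sub_distrib, hκ1, sum_const, nsmul_one]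
    ring
  have hmem : ∑ v ∈ t, (1 - κ v) • v ∈ convexHull ℝ (t : Set (Pt N)) :=
    Finset.mem_convexHull'.2 ⟨_, fun v hv => (hμ v hv).le, hμ1, rfl⟩
  have hcompl : ∑ v ∈ t, (1 - κ v) • v = ∑ v ∈ t, v - ∑ v ∈ t, κ v • v := by
    simp [sub_smul, sum_sub_distrib]
  refine ht.sum_smul_notMem hcard hμ hμ1 (hempty ⟨⟨?_, ?_⟩, hmem⟩)
  · exact convexHull_min (fun v hv => (htS hv).1) hP hmem
  · rw [isLat_iff_mem_latticeAddSubgroup, hcompl]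
    exact (latticeAddSubgroup N).sub_mem
      ((latticeAddSubgroup N).sum_mem fun v hv => (htS hv).2) hlat

theorem IsIntegralPolytope.exists_sub_mem_latPts_dil (hP : IsIntegralPolytope P) {m : ℕ}
    (hm : 0 < m) (hdim : polyDim P ≤ m + 1) {z : Pt N} (hz : z ∈ latPts (dil (m + 1) P)) :
    ∃ v ∈ latPts P, z - v ∈ latPts (dil m P) := by
  classical
  obtain ⟨⟨x, hxP, rfl⟩, hzL⟩ := hz
  rw [← hP.convexHull_latPts] at hxP
  obtain ⟨t, htS, ht, hxt, hempty⟩ := exists_emptySimplex_of_mem_convexHull hP.finite_latPts hxP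
  have htP : (↑t : Set (Pt N)) ⊆ P := fun v hv => (htS hv).1
  obtain ⟨w, hw0, hw1, rfl⟩ := Finset.mem_convexHull'.1 hxt
  set κ : Pt N → ℝ := fun v => ((m + 1 : ℕ) : ℝ) * w v
  have hκ0 : ∀ v ∈ t, 0 ≤ κ v := fun v hv => mul_nonneg (Nat.cast_nonneg _) (hw0 v hv)
  have hκ1 : ∑ v ∈ t, κ v = m + 1 := by simp [κ, ← mul_sum, hw1]
  have hz : ((m + 1 : ℕ) : ℝ) • ∑ v ∈ t, w v • v = ∑ v ∈ t, κ v • v := by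
    simp [κ, smul_sum, mul_smul]
  beta_reduce at hzL ⊢
  rw [hz] at hzL ⊢
  obtain ⟨v₀, hv₀, hκv₀⟩ : ∃ v₀ ∈ t, 1 ≤ κ v₀ := by
    have htne : t.Nonempty := nonempty_of_sum_ne_zero (by rw [hκ1]; positivity)
    have hcard := (ht.card_le_polyDim_succ htP).trans (Nat.add_le_add_right hdim 1)
    by_cases hle : #t ≤ m + 1
    · exact exists_le_of_sum_le htne (by simpa [hκ1] using (Nat.cast_le (α := ℝ)).2 hle)
    · refine exists_one_le_coord_of_emptySimplex hP.convex htS ht hempty (by omega) ?_ hzL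
      rw [hκ1, show #t = m + 2 by omega]
      push_cast
      ring
  refine ⟨v₀, htS hv₀, ⟨?_, (latticeAddSubgroup N).sub_mem hzL (htS hv₀).2⟩⟩
  have hsub : ∑ v ∈ t, κ v • v - v₀ = ∑ v ∈ t, (κ v - if v = v₀ then 1 else 0) • v := by
    simp [sub_smul, sum_sub_distrib, ite_smul, hv₀]
  rw [hsub]
  refine hP.convex.sum_smul_mem_dil hm (fun v hv => ?_) ?_ htP
  · split_ifs with h
    · exact sub_nonneg.2 (h ▸ hκv₀)
    · simpa using hκ0 v hv
  · simp [sum_sub_distrib, hκ1, hv₀]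

theorem IsIntegralPolytope.exists_sub_decomposesIn (hP : IsIntegralPolytope P) {r : ℕ}
    (hr : 0 < r) (hdim : polyDim P ≤ r + 1) (M : ℕ) {α : Pt N}
    (hα : α ∈ latPts (dil (r + M) P)) : ∃ w ∈ latPts (dil r P), DecomposesIn P M (α - w) := by
  induction M generalizing α with
  | zero => exact ⟨α, hα, decomposesIn_zero_iff.2 (sub_self α)⟩
  | succ M ih =>
    obtain ⟨v, hv, hαv⟩ := hP.exists_sub_mem_latPts_dil (m := r + M) (by omega) (by omega) hα
    obtain ⟨w, hw, hdec⟩ := ih hαv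
    refine ⟨w, hw, ?_⟩
    convert hdec.add (decomposesIn_one_iff.2 hv) using 1
    abel

theorem IsIntegralPolytope.hasIDP_dil_add (hP : IsIntegralPolytope P) {m : ℕ} (hm : 0 < m)
    (hdim : polyDim P ≤ 2 * m + 1) (hIDP : HasIDP (dil m P)) (s : ℕ) :
    HasIDP (dil (m + s) P) := by
  intro j hj α hα
  rw [dil_dil] at hα
  have hne := nonempty_of_mem_dil hα.1
  obtain rfl | ⟨i, rfl⟩ : j = 1 ∨ ∃ i, j = i + 2 := by
    rcases j with _ | _ | i
    exacts [absurd hj (lt_irrefl 0), Or.inl rfl, Or.inr ⟨i, rfl⟩]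
  · exact decomposesIn_one_iff.2 (by rwa [one_mul] at hα)
  obtain ⟨w, hw, hβ⟩ := hP.exists_sub_decomposesIn (r := 2 * m) (by omega) hdim
    (s + s + i * (m + s)) (by convert hα using 3; ring)
  obtain ⟨w₁, w₂, hw₁, hw₂, rfl⟩ :=
    (decomposesIn_add_iff (a := 1) (b := 1)).1 (hIDP 2 two_pos w (by rwa [dil_dil]))
  obtain ⟨β, γ, hβ, hγ, hsplit⟩ := decomposesIn_add_iff.1 hβ
  obtain ⟨β₁, β₂, hβ₁, hβ₂, rfl⟩ := decomposesIn_add_iff.1 hβ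
  have merge : ∀ {w β : Pt N}, DecomposesIn (dil m P) 1 w → DecomposesIn P s β →
      DecomposesIn (dil (m + s) P) 1 (w + β) := fun hw hβ =>
    decomposesIn_one_iff.2 (hP.convex.add_mem_latPts_dil (decomposesIn_one_iff.1 hw)
      (hβ.mem_latPts_dil hP.convex hne))
  convert ((merge hw₁ hβ₁).add (merge hw₂ hβ₂)).add (hγ.dil hP.convex hne) using 1
  · omega
  · rw [sub_eq_iff_eq_add] at hsplit
    rw [hsplit]
    abel

end LatticePolytope

/-- if `μ_midp(P) ≤ (d-1)/2`, then `μ_idp(P) ≤ (d-3)/2 + μ_midp(P)`. -/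
theorem idp_le_of_small_midp {N d : ℕ} (P : Set (Pt N))
    (hP : IsIntegralPolytope P) (hdim : polyDim P = d)
    (k : ℕ) (hk : IsLeast {k : ℕ | 0 < k ∧ HasIDP (dil k P)} k)
    (hsmall : 2 * (k : ℝ) ≤ (d : ℝ) - 1) :
    ∀ n : ℕ, ((d : ℝ) - 3) / 2 + k ≤ n → HasIDP (dil n P) := by
  obtain ⟨⟨hk, hkIDP⟩, -⟩ := hk
  intro n hn
  have hn' : d + 2 * k ≤ 2 * n + 3 := by exact_mod_cast (by linarith : (d : ℝ) + 2 * k ≤ 2 * n + 3)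
  have hd : 2 * k + 1 ≤ d := by exact_mod_cast (by linarith : 2 * (k : ℝ) + 1 ≤ d)
  obtain ⟨q, s, hs, rfl⟩ : ∃ q s, s < k ∧ n = k * q + s :=
    ⟨n / k, n % k, Nat.mod_lt n hk, (Nat.div_add_mod n k).symm⟩
  have hq : 0 < q := Nat.pos_of_ne_zero fun hq => by subst hq; omega
  have hIDP : HasIDP (dil (k * q) P) := by
    simpa [dil_dil, mul_comm] using hkIDP.dil (hP.convex.smul _) hq
  exact hP.hasIDP_dil_add (Nat.mul_pos hk hq) (by rw [hdim]; linarith) hIDP s
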